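/- Let R = k[x,y,z]/(z^2 - xy) over a field k of characteristic 0. Then Ω^3_{R/k} is isomorphic to k as an R-module (where R acts through the augmentation R → k killing x, y, z), generated by dx∧dy∧dz. -/

import Mathlib

open MvPolynomial

set_option maxHeartbeats 1000000
set_option synthInstance.maxHeartbeats 100000

/-- The ideal `(z² - xy)` in `k[x,y,z]` (variables `X 0, X 1, X 2`). -/
noncomputable def conicIdeal (k : Type) [Field k] : Ideal (MvPolynomial (Fin 3) k) :=
  Ideal.span {(X 2 : MvPolynomial (Fin 3) k) ^ 2 - X 0 * X 1}

/-- The homogeneous coordinate ring `R = k[x,y,z]/(z² - xy)` of the plane conic. -/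
abbrev ConicRing (k : Type) [Field k] : Type := MvPolynomial (Fin 3) k ⧸ conicIdeal k

/-- The image of `X i` in `R = k[x,y,z]/(z² - xy)`. -/
noncomputable def conicVar (k : Type) [Field k] (i : Fin 3) : ConicRing k :=
  Ideal.Quotient.mk (conicIdeal k) (X i)

/-- `d(X i)` viewed inside the exterior algebra of `Ω¹_{R/k}` over `R`. -/
noncomputable def conicDVar (k : Type) [Field k] (i : Fin 3) :
    ExteriorAlgebra (ConicRing k) (Ω[ConicRing k⁄k]) :=
  ExteriorAlgebra.ι (ConicRing k)
    ((KaehlerDifferential.D k (ConicRing k)) (conicVar k i))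

/-!
Since `R` is generated by `x, y, z`, `Ω¹` is spanned by `dx, dy, dz` and `Ω³` is cyclic, generated
by `ω = dx ∧ dy ∧ dz`. Substituting the relation `2z·dz = x·dy + y·dx` into one slot of `ω` shows
that `x`, `y` and `2z` kill `ω`; hence the augmentation ideal `(x, y, z)` annihilates `Ω³`, which
is therefore a quotient of `k`. Conversely, the gradient at the vertex is a derivation `R → k³`
(with `R` acting through the augmentation), and the determinant of the induced map sends `ω` to `1`.
-/

open Function Submodule TrivSqZeroExt

theorem KaehlerDifferential.span_D_image_eq_top {R S : Type*} [CommRing R] [CommRing S]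
    [Algebra R S] {s : Set S} (hs : Algebra.adjoin R s = ⊤) :
    span S (KaehlerDifferential.D R S '' s) = ⊤ := by
  rw [eq_top_iff, ← KaehlerDifferential.span_range_derivation, span_le]
  rintro _ ⟨x, rfl⟩
  have hx : x ∈ Algebra.adjoin R s := hs ▸ Algebra.mem_top
  induction hx using Algebra.adjoin_induction with
  | mem x hx => exact subset_span ⟨x, hx, rfl⟩
  | algebraMap r => simp
  | add x y _ _ hx hy => rw [map_add]; exact add_mem hx hy
  | mul x y _ _ hx hy => rw [Derivation.leibniz]; exact add_mem (smul_mem _ _ hy) (smul_mem _ _ hx)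

theorem exteriorPower.span_ιMulti_eq_top_of_span_eq_top {R M : Type*} [CommRing R]
    [AddCommGroup M] [Module R M] {n : ℕ} {v : Fin n → M} (hv : span R (Set.range v) = ⊤) :
    span R {ιMulti R n v} = ⊤ := by
  rw [eq_top_iff, ← ιMulti_span_of_span R n M hv, span_le]
  rintro _ ⟨a, ha, rfl⟩
  obtain ⟨α, rfl⟩ := Set.range_subset_range_iff_exists_comp.mp ha
  by_cases hα : Injective α
  · let σ := Equiv.ofBijective α (Finite.injective_iff_bijective.mp hα)
    rw [show v ∘ α = v ∘ σ from rfl, AlternatingMap.map_perm, Units.smul_def]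
    exact zsmul_mem (mem_span_singleton_self _) _
  · rw [AlternatingMap.map_eq_zero_of_not_injective _ _ fun h => hα h.of_comp]
    exact zero_mem _

theorem AlternatingMap.smul_apply_eq_zero_of_smul_mem_span {R M N ι : Type*} [CommSemiring R]
    [AddCommMonoid M] [Module R M] [AddCommMonoid N] [Module R N] [DecidableEq ι]
    (g : M [⋀^ι]→ₗ[R] N) {a : ι → M} {i : ι} {c : R} (hc : c • a i ∈ span R (a '' {i}ᶜ)) :
    c • g a = 0 := by
  have hvanish : span R (a '' {i}ᶜ) ≤ LinearMap.ker (g.toMultilinearMap.toLinearMap a i) := by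
    rw [span_le]
    rintro _ ⟨j, hj, rfl⟩
    exact g.map_update_self a (Ne.symm hj)
  have := hvanish hc
  rwa [LinearMap.mem_ker, LinearMap.map_smul, MultilinearMap.toLinearMap_apply,
    update_eq_self] at this

def AlternatingMap.restrictScalars (R : Type*) {A M N ι : Type*} [Semiring R] [Semiring A]
    [SMul R A] [AddCommMonoid M] [AddCommMonoid N] [Module A M] [Module A N] [Module R M]
    [Module R N] [IsScalarTower R A M] [IsScalarTower R A N] (f : M [⋀^ι]→ₗ[A] N) :
    M [⋀^ι]→ₗ[R] N :=
  { f.toMultilinearMap.restrictScalars R with map_eq_zero_of_eq' := f.map_eq_zero_of_eq }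

theorem AlgHom.ker_eq_span_of_adjoin_eq_top {R S : Type*} [CommRing R] [CommRing S] [Algebra R S]
    (ε : S →ₐ[R] R) {s : Set S} (hs : Algebra.adjoin R s = ⊤) (hε : ∀ x ∈ s, ε x = 0) :
    RingHom.ker ε = Ideal.span s := by
  refine le_antisymm (fun r hr => ?_) (Ideal.span_le.mpr hε)
  suffices ∀ r ∈ Algebra.adjoin R s, r - algebraMap R S (ε r) ∈ Ideal.span s by
    simpa [RingHom.mem_ker.mp hr] using this r (hs ▸ Algebra.mem_top)
  intro r hr
  induction hr using Algebra.adjoin_induction with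
  | mem x hx => rw [hε x hx, map_zero, sub_zero]; exact Ideal.subset_span hx
  | algebraMap c => simp
  | add x y _ _ hx hy => rw [map_add, map_add, add_sub_add_comm]; exact add_mem hx hy
  | mul x y _ _ hx hy =>
    have : x * y - algebraMap R S (ε (x * y)) =
        (x - algebraMap R S (ε x)) * y + algebraMap R S (ε x) * (y - algebraMap R S (ε y)) := by
      rw [map_mul, map_mul]; ring
    rw [this]
    exact add_mem (Ideal.mul_mem_right _ _ hx) (Ideal.mul_mem_left _ _ hy)

theorem LinearMap.bijective_of_span_singleton_eq_top {R K N : Type*} [CommSemiring R] [Semiring K]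
    [Algebra R K] [AddCommGroup N] [Module R N] (hsurj : Surjective (algebraMap R K))
    (Φ : N →ₗ[R] K) {ω : N} (hω : span R {ω} = ⊤) (hΦ : Φ ω = 1)
    (hann : ∀ r, algebraMap R K r = 0 → r • ω = 0) : Bijective Φ := by
  have hΦsmul : ∀ r : R, Φ (r • ω) = algebraMap R K r := by
    intro r; rw [Φ.map_smul, hΦ, Algebra.smul_def, mul_one]
  refine ⟨(injective_iff_map_eq_zero Φ).mpr fun w hw => ?_, fun c => ?_⟩
  · obtain ⟨r, rfl⟩ := mem_span_singleton.mp (hω ▸ mem_top : w ∈ span R {ω})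
    exact hann r (hΦsmul r ▸ hw)
  · obtain ⟨r, rfl⟩ := hsurj c
    exact ⟨r • ω, hΦsmul r⟩

noncomputable def Derivation.ofAlgHomTrivSqZeroExt {R A M : Type*} [CommSemiring R]
    [CommSemiring A] [Algebra R A] [AddCommMonoid M] [Module R M] [Module Rᵐᵒᵖ M]
    [IsCentralScalar R M] [Module A M] [IsScalarTower R A M] (f : A →ₐ[R] TrivSqZeroExt R M)
    (hf : ∀ (a : A) (m : M), a • m = (f a).fst • m) : Derivation R A M where
  toLinearMap := (sndHom R M).comp f.toLinearMap
  map_one_eq_zero' := by simp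
  leibniz' a b := by
    simp only [LinearMap.coe_comp, comp_apply, AlgHom.toLinearMap_apply, sndHom_apply, map_mul,
      snd_mul, hf, op_smul_eq_smul]

section Conic

variable (k : Type) [Field k]

theorem conicVar_mul_self : conicVar k 2 * conicVar k 2 = conicVar k 0 * conicVar k 1 := by
  have h : Ideal.Quotient.mk (conicIdeal k) ((X 2 : MvPolynomial (Fin 3) k) ^ 2 - X 0 * X 1) = 0 :=
    Ideal.Quotient.eq_zero_iff_mem.2 (Ideal.subset_span rfl)
  rwa [map_sub, map_pow, map_mul, sub_eq_zero, sq] at h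

theorem adjoin_range_conicVar : Algebra.adjoin k (Set.range (conicVar k)) = ⊤ := by
  rw [show conicVar k = Ideal.Quotient.mkₐ k (conicIdeal k) ∘ X from rfl, Set.range_comp,
    ← AlgHom.map_adjoin, adjoin_range_X, Algebra.map_top, AlgHom.range_eq_top]
  exact Ideal.Quotient.mkₐ_surjective k _

theorem conic_algHom_ext {A : Type*} [Semiring A] [Algebra k A] {f g : ConicRing k →ₐ[k] A}
    (h : ∀ i, f (conicVar k i) = g (conicVar k i)) : f = g :=
  Ideal.Quotient.algHom_ext _ (MvPolynomial.algHom_ext h)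

/-- The 1-jet at the vertex, `r ↦ (r(0), ∇r(0))`; it is well defined because `z² - xy` vanishes
to second order there. -/
noncomputable def conicOneJet : ConicRing k →ₐ[k] TrivSqZeroExt k (Fin 3 → k) :=
  Ideal.Quotient.liftₐ (conicIdeal k) (aeval fun i => inr (Pi.single i 1)) <| by
    change conicIdeal k ≤ RingHom.ker _
    rw [conicIdeal, Ideal.span_singleton_le_iff_mem, RingHom.mem_ker]
    simp only [map_sub, map_mul, aeval_X, sq, inr_mul_inr, sub_zero]

theorem conicOneJet_conicVar (i : Fin 3) : conicOneJet k (conicVar k i) = inr (Pi.single i 1) :=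
  aeval_X _ i

noncomputable def conicAugmentation : ConicRing k →ₐ[k] k :=
  (fstHom k k (Fin 3 → k)).comp (conicOneJet k)

noncomputable instance : Algebra (ConicRing k) k := (conicAugmentation k).toRingHom.toAlgebra

instance : IsScalarTower k (ConicRing k) k :=
  IsScalarTower.of_algebraMap_eq fun c => ((conicAugmentation k).commutes c).symm

noncomputable def conicGradient : Derivation k (ConicRing k) (Fin 3 → k) :=
  Derivation.ofAlgHomTrivSqZeroExt (conicOneJet k) fun _ _ => rfl

theorem conicGradient_conicVar (i : Fin 3) : conicGradient k (conicVar k i) = Pi.single i 1 := by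
  simp [conicGradient, Derivation.ofAlgHomTrivSqZeroExt, conicOneJet_conicVar]

noncomputable def conicD (i : Fin 3) : Ω[ConicRing k⁄k] :=
  KaehlerDifferential.D k (ConicRing k) (conicVar k i)

noncomputable def conicVolumeForm : ⋀[ConicRing k]^3 (Ω[ConicRing k⁄k]) :=
  exteriorPower.ιMulti (ConicRing k) 3 (conicD k)

theorem coe_conicVolumeForm :
    (conicVolumeForm k : ExteriorAlgebra (ConicRing k) (Ω[ConicRing k⁄k])) =
      conicDVar k 0 * conicDVar k 1 * conicDVar k 2 := by
  simp only [conicVolumeForm, exteriorPower.ιMulti_apply_coe, ExteriorAlgebra.ιMulti_apply,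
    List.ofFn_succ, List.ofFn_zero, List.prod_cons, List.prod_nil, mul_one, mul_assoc]
  rfl

theorem span_conicVolumeForm : span (ConicRing k) {conicVolumeForm k} = ⊤ := by
  apply exteriorPower.span_ιMulti_eq_top_of_span_eq_top
  rw [← KaehlerDifferential.span_D_image_eq_top (adjoin_range_conicVar k), ← Set.range_comp]
  rfl

theorem conicD_relation : conicVar k 2 • conicD k 2 + conicVar k 2 • conicD k 2 =
    conicVar k 0 • conicD k 1 + conicVar k 1 • conicD k 0 := by
  simpa only [conicD, Derivation.leibniz] using
    congrArg (KaehlerDifferential.D k (ConicRing k)) (conicVar_mul_self k)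

theorem conicVar_smul_conicVolumeForm [CharZero k] (i : Fin 3) :
    conicVar k i • conicVolumeForm k = 0 := by
  have mem {i j : Fin 3} (r : ConicRing k) (hij : j ≠ i) :
      r • conicD k j ∈ span (ConicRing k) (conicD k '' {i}ᶜ) :=
    smul_mem _ r (subset_span ⟨j, hij, rfl⟩)
  fin_cases i
  · show conicVar k 0 • conicVolumeForm k = 0
    apply AlternatingMap.smul_apply_eq_zero_of_smul_mem_span (i := 1)
    rw [eq_sub_of_add_eq (conicD_relation k).symm]
    exact sub_mem (add_mem (mem _ (by decide)) (mem _ (by decide))) (mem _ (by decide))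
  · show conicVar k 1 • conicVolumeForm k = 0
    apply AlternatingMap.smul_apply_eq_zero_of_smul_mem_span (i := 0)
    rw [eq_sub_of_add_eq' (conicD_relation k).symm]
    exact sub_mem (add_mem (mem _ (by decide)) (mem _ (by decide))) (mem _ (by decide))
  · show conicVar k 2 • conicVolumeForm k = 0
    apply AlternatingMap.smul_apply_eq_zero_of_smul_mem_span (i := 2)
    have halve : conicVar k 2 • conicD k 2 =
        (2⁻¹ : k) • (conicVar k 0 • conicD k 1 + conicVar k 1 • conicD k 0) := by
      rw [← conicD_relation, ← two_smul k, smul_smul, inv_mul_cancel₀ two_ne_zero, one_smul]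
    rw [halve]
    exact smul_of_tower_mem _ _ (add_mem (mem _ (by decide)) (mem _ (by decide)))

theorem smul_conicVolumeForm_eq_zero [CharZero k] {r : ConicRing k}
    (hr : conicAugmentation k r = 0) : r • conicVolumeForm k = 0 := by
  have hker := AlgHom.ker_eq_span_of_adjoin_eq_top (conicAugmentation k) (adjoin_range_conicVar k)
    (by rintro _ ⟨i, rfl⟩; simp [conicAugmentation, conicOneJet_conicVar])
  have hann : Ideal.span (Set.range (conicVar k)) ≤
      LinearMap.ker (LinearMap.toSpanSingleton (ConicRing k) _ (conicVolumeForm k)) :=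
    Ideal.span_le.mpr (by rintro _ ⟨i, rfl⟩; exact conicVar_smul_conicVolumeForm k i)
  exact hann (hker ▸ hr)

noncomputable def conicDet : ⋀[ConicRing k]^3 (Ω[ConicRing k⁄k]) →ₗ[ConicRing k] k :=
  exteriorPower.alternatingMapLinearEquiv
    ((Matrix.detRowAlternating.restrictScalars (ConicRing k)).compLinearMap
      (conicGradient k).liftKaehlerDifferential)

theorem conicDet_conicVolumeForm : conicDet k (conicVolumeForm k) = 1 := by
  rw [conicDet, conicVolumeForm, exteriorPower.alternatingMapLinearEquiv_apply_ιMulti]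
  show Matrix.det (Matrix.of fun i => (conicGradient k).liftKaehlerDifferential (conicD k i)) = 1
  simp only [conicD, Derivation.liftKaehlerDifferential_comp_D, conicGradient_conicVar]
  rw [show Matrix.of (fun i : Fin 3 => (Pi.single i 1 : Fin 3 → k)) = 1 by
    ext i j; simp [Matrix.one_apply, Pi.single_apply, eq_comm], Matrix.det_one]

theorem bijective_conicDet [CharZero k] : Bijective (conicDet k) :=
  LinearMap.bijective_of_span_singleton_eq_top
    (fun c => ⟨algebraMap k _ c, (conicAugmentation k).commutes c⟩) (conicDet k)
    (span_conicVolumeForm k) (conicDet_conicVolumeForm k)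
    fun _ hr => smul_conicVolumeForm_eq_zero k hr

end Conic

/-- Let `R = k[x,y,z]/(z² - xy)` over a field `k` of characteristic 0.
Then `Ω³_{R/k}` (the third exterior power of `Ω¹_{R/k}`, realized as a submodule of the
exterior algebra) is isomorphic to `k` as an `R`-module, where `R` acts on `k` through the
augmentation `ε : R → k` killing `x, y, z`, with generator `dx∧dy∧dz` mapping to `1`. -/
theorem third_exterior_power_conic (k : Type) [Field k] [CharZero k] :
    letI dx := conicDVar k 0
    letI dy := conicDVar k 1
    letI dz := conicDVar k 2
    dx * dy * dz ∈ ⋀[ConicRing k]^3 (Ω[ConicRing k⁄k]) ∧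
    ∀ ε : ConicRing k →ₐ[k] k,
      (ε (conicVar k 0) = 0 ∧ ε (conicVar k 1) = 0 ∧ ε (conicVar k 2) = 0) →
      ∃ e : (⋀[ConicRing k]^3 (Ω[ConicRing k⁄k])) ≃+ k,
        (∀ (r : ConicRing k) (m : ⋀[ConicRing k]^3 (Ω[ConicRing k⁄k])),
          e (r • m) = ε r * e m) ∧
        ∀ w : ⋀[ConicRing k]^3 (Ω[ConicRing k⁄k]),
          (w : ExteriorAlgebra (ConicRing k) (Ω[ConicRing k⁄k])) = dx * dy * dz →
          e w = 1 := by
  refine ⟨coe_conicVolumeForm k ▸ (conicVolumeForm k).2, fun ε ⟨hx, hy, hz⟩ => ?_⟩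
  obtain rfl : ε = conicAugmentation k := conic_algHom_ext k fun i => by
    fin_cases i <;> simp [conicAugmentation, conicOneJet_conicVar, hx, hy, hz]
  refine ⟨AddEquiv.ofBijective (conicDet k).toAddMonoidHom (bijective_conicDet k),
    fun r m => (conicDet k).map_smul r m, fun w hw => ?_⟩
  rw [← coe_conicVolumeForm, SetLike.coe_eq_coe] at hw
  exact hw ▸ conicDet_conicVolumeForm k
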